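/- For every Mockingbird term t, the set P(t) = {s : t ≼ s}, partially ordered by (the restriction of) ≼, is a finite lattice: P(t) is a finite set, and any two elements of P(t) have a greatest lower bound and a least upper bound within P(t). -/

import Mathlib

/-- Mockingbird terms: the constant `M`, variables `x i`, and applications. -/
inductive MTerm : Type
  | M : MTerm
  | var : ℕ → MTerm
  | app : MTerm → MTerm → MTerm
  deriving DecidableEq

/-- The one-step rewrite relation `⇒` on Mockingbird terms. -/
inductive Step : MTerm → MTerm → Prop
  | mock (t : MTerm) : Step (MTerm.app MTerm.M t) (MTerm.app t t)
  | left {t1 t1' : MTerm} (t2 : MTerm) :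
      Step t1 t1' → Step (MTerm.app t1 t2) (MTerm.app t1' t2)
  | right (t1 : MTerm) {t2 t2' : MTerm} :
      Step t2 t2' → Step (MTerm.app t1 t2) (MTerm.app t1 t2')

/-- `≼`, the reflexive-transitive closure of `⇒`. -/
def MLe : MTerm → MTerm → Prop := Relation.ReflTransGen Step

/-- `≡`, the reflexive-symmetric-transitive closure of `⇒`. -/
def MEquiv : MTerm → MTerm → Prop := Relation.EqvGen Step

/-- Strict version of `≼`. -/
def MLt (s t : MTerm) : Prop := MLe s t ∧ s ≠ t

/-- Covering relation for `≼`. -/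
def MCovBy (s t : MTerm) : Prop := MLt s t ∧ ∀ z, MLt s z → ¬ MLt z t

/-- Duplicative trees: white or black nodes with a list (forest) of children. -/
inductive DTree : Type
  | W : List DTree → DTree
  | B : List DTree → DTree

/-- The one-step relation `⋖` on duplicative forests. -/
inductive DStep : List DTree → List DTree → Prop
  | dup (g : List DTree) : DStep [DTree.W g] [DTree.B (g ++ g)]
  | white {g g' : List DTree} : DStep g g' → DStep [DTree.W g] [DTree.W g']
  | black {g g' : List DTree} : DStep g g' → DStep [DTree.B g] [DTree.B g']
  | head {t t' : DTree} (f : List DTree) : DStep [t] [t'] → DStep (t :: f) (t' :: f)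
  | tail (t : DTree) {f f' : List DTree} : DStep f f' → DStep (t :: f) (t :: f')

/-- `≪`, the reflexive-transitive closure of `⋖`. -/
def DLe : List DTree → List DTree → Prop := Relation.ReflTransGen DStep

/-- The map `fr` from Mockingbird terms to duplicative forests. -/
def fr : MTerm → List DTree
  | MTerm.M => []
  | MTerm.var _ => []
  | MTerm.app MTerm.M MTerm.M => [DTree.B []]
  | MTerm.app MTerm.M t' => [DTree.W (fr t')]
  | MTerm.app t t' => [DTree.B (fr t ++ fr t')]

mutual
  /-- The pruning map on duplicative trees (returns a forest). -/
  def prT : DTree → List DTree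
    | DTree.W g => [DTree.W (prF g)]
    | DTree.B g => prF g
  /-- The pruning map on duplicative forests. -/
  def prF : List DTree → List DTree
    | [] => []
    | t :: f => prT t ++ prF f
end

mutual
  /-- The statistic `mtStat` on duplicative trees. -/
  def mtStat : DTree → ℕ
    | DTree.W g => 2 * ml g
    | DTree.B g => ml g
  /-- Sum of `mtStat` over the trees of a forest. -/
  def mtsum : List DTree → ℕ
    | [] => 0
    | t :: f => mtStat t + mtsum f
  /-- The statistic `ml` on duplicative forests: `1 - ℓ + Σ mtStat`. -/
  def ml : List DTree → ℕ
    | f => mtsum f + 1 - f.length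
end

mutual
  /-- Number of white nodes in a duplicative tree. -/
  def whitesT : DTree → ℕ
    | DTree.W g => 1 + whitesF g
    | DTree.B g => whitesF g
  /-- Number of white nodes in a duplicative forest. -/
  def whitesF : List DTree → ℕ
    | [] => 0
    | t :: f => whitesT t + whitesF f
end

/-- Closed terms: no variables. -/
def MClosed : MTerm → Prop
  | MTerm.M => True
  | MTerm.var _ => False
  | MTerm.app a b => MClosed a ∧ MClosed b

/-- Degree: number of applications. -/
def deg : MTerm → ℕ
  | MTerm.M => 0
  | MTerm.var _ => 0
  | MTerm.app a b => deg a + deg b + 1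

/-- Subterm relation. -/
inductive Subterm : MTerm → MTerm → Prop
  | refl (t : MTerm) : Subterm t t
  | left {s a : MTerm} (b : MTerm) : Subterm s a → Subterm s (MTerm.app a b)
  | right (a : MTerm) {s b : MTerm} : Subterm s b → Subterm s (MTerm.app a b)

/-- The term `r_d`. -/
def rTerm : ℕ → MTerm
  | 0 => MTerm.M
  | d + 1 => MTerm.app MTerm.M (rTerm d)

/-- Saturated chain from `a` to `b`, given as the list of its elements. -/
def SatChain (a b : MTerm) (c : List MTerm) : Prop :=
  List.Chain' MCovBy c ∧ c.head? = some a ∧ c.getLast? = some b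


section MockingbirdProof

open MTerm Relation

lemma mle_refl (t : MTerm) : MLe t t := ReflTransGen.refl

lemma mle_trans {a b c : MTerm} (h1 : MLe a b) (h2 : MLe b c) : MLe a c :=
  ReflTransGen.trans h1 h2

lemma step_isApp {s u : MTerm} (h : Step s u) : ∃ p q, u = app p q := by
  cases h <;> exact ⟨_, _, rfl⟩

lemma mle_ne_M {s u : MTerm} (h : MLe s u) (hs : s ≠ M) : u ≠ M := by
  have h' : Relation.ReflTransGen Step s u := h
  clear h
  induction h' with
  | refl => exact hs
  | tail _ hstep _ =>
      obtain ⟨p, q, rfl⟩ := step_isApp hstep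
      simp

lemma mle_app_left {a a' : MTerm} (b : MTerm) (h : MLe a a') :
    MLe (app a b) (app a' b) :=
  ReflTransGen.lift (fun x => app x b) (fun _ _ h => Step.left b h) _ _ h

lemma mle_app_right (a : MTerm) {b b' : MTerm} (h : MLe b b') :
    MLe (app a b) (app a b') :=
  ReflTransGen.lift (fun x => app a x) (fun _ _ h => Step.right a h) _ _ h

lemma mle_app {a a' b b' : MTerm} (h1 : MLe a a') (h2 : MLe b b') :
    MLe (app a b) (app a' b') :=
  mle_trans (mle_app_left b h1) (mle_app_right a' h2)

lemma mle_Mapp_app {r c d : MTerm} (h1 : MLe r c) (h2 : MLe r d) :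
    MLe (app M r) (app c d) :=
  ReflTransGen.head (Step.mock r) (mle_app h1 h2)

lemma mle_M_eq {u : MTerm} (h : MLe M u) : u = M := by
  have h' : Relation.ReflTransGen Step M u := h
  clear h
  induction h' with
  | refl => rfl
  | tail _ hstep ih => subst ih; cases hstep

lemma mle_var_eq {i : ℕ} {u : MTerm} (h : MLe (var i) u) : u = var i := by
  have h' : Relation.ReflTransGen Step (var i) u := h
  clear h
  induction h' with
  | refl => rfl
  | tail _ hstep ih => subst ih; cases hstep

lemma mle_MM_eq {u : MTerm} (h : MLe (app M M) u) : u = app M M := by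
  have h' : Relation.ReflTransGen Step (app M M) u := h
  clear h
  induction h' with
  | refl => rfl
  | tail _ hstep ih =>
      subst ih
      cases hstep with
      | mock => rfl
      | left _ hs => cases hs
      | right _ hs => cases hs

lemma mle_app_iff {a b u : MTerm} (ha : a ≠ M) :
    MLe (app a b) u ↔ ∃ a' b', u = app a' b' ∧ MLe a a' ∧ MLe b b' := by
  constructor
  · intro h
    have h' : Relation.ReflTransGen Step (app a b) u := h
    clear h
    induction h' with
    | refl => exact ⟨a, b, rfl, mle_refl a, mle_refl b⟩
    | tail _ hstep ih =>
        obtain ⟨a', b', rfl, h1, h2⟩ := ih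
        cases hstep with
        | mock => exact absurd rfl (mle_ne_M h1 ha)
        | left _ hs => exact ⟨_, b', rfl, ReflTransGen.tail h1 hs, h2⟩
        | right _ hs => exact ⟨a', _, rfl, h1, ReflTransGen.tail h2 hs⟩
  · rintro ⟨a', b', rfl, h1, h2⟩
    exact mle_app h1 h2

lemma mle_app_inv {e f c d : MTerm} (he : e ≠ M) (h : MLe (app e f) (app c d)) :
    MLe e c ∧ MLe f d := by
  obtain ⟨c0, d0, heq, h1, h2⟩ := (mle_app_iff he).1 h
  injection heq with e1 e2
  subst e1; subst e2
  exact ⟨h1, h2⟩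

lemma mle_Mapp_iff {b u : MTerm} (hb : b ≠ M) :
    MLe (app M b) u ↔ (∃ b', u = app M b' ∧ MLe b b') ∨
      (∃ c d, u = app c d ∧ MLe b c ∧ MLe b d) := by
  constructor
  · intro h
    have h' : Relation.ReflTransGen Step (app M b) u := h
    clear h
    induction h' with
    | refl => exact Or.inl ⟨b, rfl, mle_refl b⟩
    | tail _ hstep ih =>
        rcases ih with ⟨b', rfl, h1⟩ | ⟨c, d, rfl, h1, h2⟩
        · cases hstep with
          | mock => exact Or.inr ⟨b', b', rfl, h1, h1⟩
          | left _ hs => cases hs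
          | right _ hs => exact Or.inl ⟨_, rfl, ReflTransGen.tail h1 hs⟩
        · cases hstep with
          | mock => exact absurd rfl (mle_ne_M h1 hb)
          | left _ hs => exact Or.inr ⟨_, d, rfl, ReflTransGen.tail h1 hs, h2⟩
          | right _ hs => exact Or.inr ⟨c, _, rfl, h1, ReflTransGen.tail h2 hs⟩
  · rintro (⟨b', rfl, h1⟩ | ⟨c, d, rfl, h1, h2⟩)
    · exact mle_app_right M h1
    · exact mle_Mapp_app h1 h2

lemma mle_Mapp_Mapp_inv {r p : MTerm} (hr : r ≠ M) (h : MLe (app M r) (app M p)) :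
    MLe r p := by
  rcases (mle_Mapp_iff hr).1 h with ⟨b', heq, h1⟩ | ⟨c, d, heq, h1, h2⟩
  · injection heq with _ e; subst e; exact h1
  · injection heq with e1 _; subst e1; exact absurd rfl (mle_ne_M h1 hr)

lemma mle_Mapp_app_inv {r c d : MTerm} (hr : r ≠ M) (hc : c ≠ M)
    (h : MLe (app M r) (app c d)) : MLe r c ∧ MLe r d := by
  rcases (mle_Mapp_iff hr).1 h with ⟨b', heq, h1⟩ | ⟨c0, d0, heq, h1, h2⟩
  · injection heq with e1 _; exact absurd e1 hc
  · injection heq with e1 e2; subst e1; subst e2; exact ⟨h1, h2⟩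

lemma mle_app_Mapp_false {c d p : MTerm} (hc : c ≠ M) (h : MLe (app c d) (app M p)) :
    False := by
  obtain ⟨h1, _⟩ := mle_app_inv hc h
  exact mle_ne_M h1 hc rfl

/-- Existence of a greatest lower bound of `s, s'` within `P(t)`. -/
def HasMeet (t s s' : MTerm) : Prop :=
  ∃ g, MLe t g ∧ MLe g s ∧ MLe g s' ∧ ∀ z, MLe t z → MLe z s → MLe z s' → MLe z g

/-- Existence of a least upper bound of `s, s'` within `P(t)`. -/
def HasJoin (t s s' : MTerm) : Prop :=
  ∃ j, MLe t j ∧ MLe s j ∧ MLe s' j ∧ ∀ z, MLe t z → MLe s z → MLe s' z → MLe j z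

/-- `P(t)` is a finite lattice. -/
def LatP (t : MTerm) : Prop :=
  {s : MTerm | MLe t s}.Finite ∧
    ∀ s s', MLe t s → MLe t s' → HasMeet t s s' ∧ HasJoin t s s'

lemma hasMeet_comm {t s s' : MTerm} (h : HasMeet t s s') : HasMeet t s' s := by
  obtain ⟨g, h0, h1, h2, h3⟩ := h
  exact ⟨g, h0, h2, h1, fun z hz hz1 hz2 => h3 z hz hz2 hz1⟩

lemma hasJoin_comm {t s s' : MTerm} (h : HasJoin t s s') : HasJoin t s' s := by
  obtain ⟨j, h0, h1, h2, h3⟩ := h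
  exact ⟨j, h0, h2, h1, fun z hz hz1 hz2 => h3 z hz hz2 hz1⟩

lemma latP_of_singleton {t : MTerm} (h : ∀ u, MLe t u → u = t) : LatP t := by
  refine ⟨Set.Finite.subset (Set.finite_singleton t) (fun u hu => h u hu), ?_⟩
  intro s s' hs hs'
  refine ⟨⟨t, mle_refl t, hs, hs', fun z hz _ _ => ?_⟩,
          ⟨t, mle_refl t, ?_, ?_, fun z hz _ _ => ?_⟩⟩
  · rw [h z hz]; exact mle_refl t
  · rw [h s hs]; exact mle_refl t
  · rw [h s' hs']; exact mle_refl t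
  · exact hz

lemma latP_app {a b : MTerm} (ha : a ≠ M) (Ha : LatP a) (Hb : LatP b) :
    LatP (app a b) := by
  obtain ⟨finA, latA⟩ := Ha
  obtain ⟨finB, latB⟩ := Hb
  constructor
  · apply Set.Finite.subset ((finA.prod finB).image (fun p => app p.1 p.2))
    rintro u hu
    obtain ⟨a', b', rfl, h1, h2⟩ := (mle_app_iff ha).1 hu
    exact ⟨(a', b'), ⟨h1, h2⟩, rfl⟩
  · intro s s' hs hs'
    obtain ⟨c, d, rfl, hc, hd⟩ := (mle_app_iff ha).1 hs
    obtain ⟨c', d', rfl, hc', hd'⟩ := (mle_app_iff ha).1 hs'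
    obtain ⟨⟨gc, hgc0, hgc1, hgc2, hgc3⟩, ⟨jc, hjc0, hjc1, hjc2, hjc3⟩⟩ :=
      latA c c' hc hc'
    obtain ⟨⟨gd, hgd0, hgd1, hgd2, hgd3⟩, ⟨jd, hjd0, hjd1, hjd2, hjd3⟩⟩ :=
      latB d d' hd hd'
    have hcM : c ≠ M := mle_ne_M hc ha
    have hc'M : c' ≠ M := mle_ne_M hc' ha
    constructor
    · refine ⟨app gc gd, mle_app hgc0 hgd0, mle_app hgc1 hgd1, mle_app hgc2 hgd2, ?_⟩
      intro z hz hz1 hz2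
      obtain ⟨e, f, rfl, he, hf⟩ := (mle_app_iff ha).1 hz
      have heM : e ≠ M := mle_ne_M he ha
      obtain ⟨h1, h2⟩ := mle_app_inv heM hz1
      obtain ⟨h3, h4⟩ := mle_app_inv heM hz2
      exact mle_app (hgc3 e he h1 h3) (hgd3 f hf h2 h4)
    · refine ⟨app jc jd, mle_trans hs (mle_app hjc1 hjd1),
        mle_app hjc1 hjd1, mle_app hjc2 hjd2, ?_⟩
      intro z hz hz1 hz2
      obtain ⟨e, f, rfl, he, hf⟩ := (mle_app_iff hcM).1 hz1
      obtain ⟨h3, h4⟩ := mle_app_inv hc'M hz2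
      exact mle_app (hjc3 e (mle_trans hc he) he h3) (hjd3 f (mle_trans hd hf) hf h4)

/-- The mixed case: meet and join of `M⋆p` and `c⋆d` inside `P(M⋆b)`. -/
lemma latP_Mapp_mixed {b p c d : MTerm} (hb : b ≠ M)
    (latB : ∀ s s', MLe b s → MLe b s' → HasMeet b s s' ∧ HasJoin b s s')
    (hp : MLe b p) (hc : MLe b c) (hd : MLe b d) :
    HasMeet (app M b) (app M p) (app c d) ∧ HasJoin (app M b) (app M p) (app c d) := by
  have hpM : p ≠ M := mle_ne_M hp hb
  have hcM : c ≠ M := mle_ne_M hc hb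
  have hdM : d ≠ M := mle_ne_M hd hb
  constructor
  · -- meet: M ⋆ (p ⊓ (c ⊓ d))
    obtain ⟨g1, hg10, hg11, hg12, hg13⟩ := (latB c d hc hd).1
    obtain ⟨g0, hg00, hg01, hg02, hg03⟩ := (latB p g1 hp hg10).1
    refine ⟨app M g0, mle_app_right M hg00, mle_app_right M hg01,
      mle_Mapp_app (mle_trans hg02 hg11) (mle_trans hg02 hg12), ?_⟩
    intro z hz hz1 hz2
    rcases (mle_Mapp_iff hb).1 hz with ⟨r, rfl, hr⟩ | ⟨e, f, rfl, he, hf⟩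
    · have hrM : r ≠ M := mle_ne_M hr hb
      have h1 : MLe r p := mle_Mapp_Mapp_inv hrM hz1
      obtain ⟨h2, h3⟩ := mle_Mapp_app_inv hrM hcM hz2
      exact mle_app_right M (hg03 r hr h1 (hg13 r hr h2 h3))
    · exact absurd hz1 (fun h => mle_app_Mapp_false (mle_ne_M he hb) h)
  · -- join: (p ⊔ c) ⋆ (p ⊔ d)
    obtain ⟨j1, hj10, hj11, hj12, hj13⟩ := (latB p c hp hc).2
    obtain ⟨j2, hj20, hj21, hj22, hj23⟩ := (latB p d hp hd).2
    refine ⟨app j1 j2, mle_Mapp_app (mle_trans hp hj11) (mle_trans hp hj21),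
      mle_Mapp_app hj11 hj21, mle_app hj12 hj22, ?_⟩
    intro z hz hz1 hz2
    obtain ⟨e, f, rfl, he, hf⟩ := (mle_app_iff hcM).1 hz2
    have heM : e ≠ M := mle_ne_M he hcM
    obtain ⟨h1, h2⟩ := mle_Mapp_app_inv hpM heM hz1
    exact mle_app (hj13 e (mle_trans hc he) h1 he) (hj23 f (mle_trans hd hf) h2 hf)

lemma latP_Mapp {b : MTerm} (hb : b ≠ M) (Hb : LatP b) : LatP (app M b) := by
  obtain ⟨finB, latB⟩ := Hb
  constructor
  · apply Set.Finite.subset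
      ((finB.image (fun x => app M x)).union ((finB.prod finB).image (fun p => app p.1 p.2)))
    rintro u hu
    rcases (mle_Mapp_iff hb).1 hu with ⟨b', rfl, h1⟩ | ⟨c, d, rfl, h1, h2⟩
    · exact Or.inl ⟨b', h1, rfl⟩
    · exact Or.inr ⟨(c, d), ⟨h1, h2⟩, rfl⟩
  · intro s s' hs hs'
    rcases (mle_Mapp_iff hb).1 hs with ⟨p, rfl, hp⟩ | ⟨c, d, rfl, hc, hd⟩
    · rcases (mle_Mapp_iff hb).1 hs' with ⟨q, rfl, hq⟩ | ⟨c, d, rfl, hc, hd⟩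
      · -- both M-headed
        have hpM : p ≠ M := mle_ne_M hp hb
        have hqM : q ≠ M := mle_ne_M hq hb
        obtain ⟨⟨g0, hg00, hg01, hg02, hg03⟩, ⟨j0, hj00, hj01, hj02, hj03⟩⟩ :=
          latB p q hp hq
        constructor
        · refine ⟨app M g0, mle_app_right M hg00, mle_app_right M hg01,
            mle_app_right M hg02, ?_⟩
          intro z hz hz1 hz2
          rcases (mle_Mapp_iff hb).1 hz with ⟨r, rfl, hr⟩ | ⟨e, f, rfl, he, hf⟩
          · have hrM : r ≠ M := mle_ne_M hr hb
            exact mle_app_right M (hg03 r hr (mle_Mapp_Mapp_inv hrM hz1)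
              (mle_Mapp_Mapp_inv hrM hz2))
          · exact absurd hz1 (fun h => mle_app_Mapp_false (mle_ne_M he hb) h)
        · refine ⟨app M j0, mle_app_right M hj00, mle_app_right M hj01,
            mle_app_right M hj02, ?_⟩
          intro z hz hz1 hz2
          rcases (mle_Mapp_iff hb).1 hz with ⟨r, rfl, hr⟩ | ⟨e, f, rfl, he, hf⟩
          · exact mle_app_right M (hj03 r hr (mle_Mapp_Mapp_inv hpM hz1)
              (mle_Mapp_Mapp_inv hqM hz2))
          · have heM : e ≠ M := mle_ne_M he hb
            obtain ⟨h1, h2⟩ := mle_Mapp_app_inv hpM heM hz1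
            obtain ⟨h3, h4⟩ := mle_Mapp_app_inv hqM heM hz2
            exact mle_Mapp_app (hj03 e (mle_trans hp h1) h1 h3)
              (hj03 f (mle_trans hp h2) h2 h4)
      · exact latP_Mapp_mixed hb latB hp hc hd
    · rcases (mle_Mapp_iff hb).1 hs' with ⟨q, rfl, hq⟩ | ⟨c', d', rfl, hc', hd'⟩
      · obtain ⟨hm, hj⟩ := latP_Mapp_mixed hb latB hq hc hd
        exact ⟨hasMeet_comm hm, hasJoin_comm hj⟩
      · -- both app-headed
        have hcM : c ≠ M := mle_ne_M hc hb
        have hc'M : c' ≠ M := mle_ne_M hc' hb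
        obtain ⟨⟨gc, hgc0, hgc1, hgc2, hgc3⟩, ⟨jc, hjc0, hjc1, hjc2, hjc3⟩⟩ :=
          latB c c' hc hc'
        obtain ⟨⟨gd, hgd0, hgd1, hgd2, hgd3⟩, ⟨jd, hjd0, hjd1, hjd2, hjd3⟩⟩ :=
          latB d d' hd hd'
        constructor
        · refine ⟨app gc gd, mle_Mapp_app hgc0 hgd0, mle_app hgc1 hgd1,
            mle_app hgc2 hgd2, ?_⟩
          intro z hz hz1 hz2
          rcases (mle_Mapp_iff hb).1 hz with ⟨r, rfl, hr⟩ | ⟨e, f, rfl, he, hf⟩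
          · have hrM : r ≠ M := mle_ne_M hr hb
            obtain ⟨h1, h2⟩ := mle_Mapp_app_inv hrM hcM hz1
            obtain ⟨h3, h4⟩ := mle_Mapp_app_inv hrM hc'M hz2
            exact mle_Mapp_app (hgc3 r hr h1 h3) (hgd3 r hr h2 h4)
          · have heM : e ≠ M := mle_ne_M he hb
            obtain ⟨h1, h2⟩ := mle_app_inv heM hz1
            obtain ⟨h3, h4⟩ := mle_app_inv heM hz2
            exact mle_app (hgc3 e he h1 h3) (hgd3 f hf h2 h4)
        · refine ⟨app jc jd, mle_Mapp_app (mle_trans hc hjc1) (mle_trans hd hjd1),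
            mle_app hjc1 hjd1, mle_app hjc2 hjd2, ?_⟩
          intro z hz hz1 hz2
          obtain ⟨e, f, rfl, he, hf⟩ := (mle_app_iff hcM).1 hz1
          obtain ⟨h3, h4⟩ := mle_app_inv hc'M hz2
          exact mle_app (hjc3 e (mle_trans hc he) he h3)
            (hjd3 f (mle_trans hd hf) hf h4)

lemma latP_all (t : MTerm) : LatP t := by
  induction t with
  | M => exact latP_of_singleton (fun u hu => mle_M_eq hu)
  | var i => exact latP_of_singleton (fun u hu => mle_var_eq hu)
  | app a b iha ihb =>
      by_cases ha : a = M
      · subst ha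
        by_cases hb : b = M
        · subst hb
          exact latP_of_singleton (fun u hu => mle_MM_eq hu)
        · exact latP_Mapp hb ihb
      · exact latP_app ha iha ihb

end MockingbirdProof


/-- For every Mockingbird term `t`, the set `P(t) = {s : t ≼ s}`, ordered by
`≼`, is a finite lattice: it is finite and any two of its elements have a greatest lower
bound and a least upper bound within `P(t)`. -/
theorem mockingbird_subposet_finite_lattice (t : MTerm) :
    {s : MTerm | MLe t s}.Finite ∧
    ∀ s s', MLe t s → MLe t s' →
      (∃ g, MLe t g ∧ MLe g s ∧ MLe g s' ∧
        ∀ z, MLe t z → MLe z s → MLe z s' → MLe z g) ∧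
      (∃ j, MLe t j ∧ MLe s j ∧ MLe s' j ∧
        ∀ z, MLe t z → MLe s z → MLe s' z → MLe j z) := by
  obtain ⟨fin, lat⟩ := latP_all t
  exact ⟨fin, fun s s' hs hs' => lat s s' hs hs'⟩
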